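/- arXiv:0806.0021 — 2 statements merged into one kernel-verified Lean document; each statement's English description precedes it below -/
import Mathlib

section
/- The Gaussian isoperimetric function satisfies the asymptotic formula lim_{t→0⁺} I(t) / (t (2 log(1/t))^{1/2}) = 1. -/
open MeasureTheory Real

/-- The standard one-dimensional Gaussian density `φ(x) = (2π)^{-1/2} e^{-x²/2}`. -/
noncomputable def gaussPdf (x : ℝ) : ℝ := (2 * Real.pi) ^ (-(1:ℝ)/2) * Real.exp (-x^2 / 2)

/-- The standard Gaussian cumulative distribution function `Φ(r) = ∫_{-∞}^r φ(t) dt`. -/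
noncomputable def gaussCdf (r : ℝ) : ℝ := ∫ t in Set.Iic r, gaussPdf t

/-- The inverse of `Φ`. -/
noncomputable def gaussCdfInv : ℝ → ℝ := Function.invFun gaussCdf

/-- The Gaussian isoperimetric function `I(t) = φ(Φ⁻¹(t))` on `(0,1)`, with `I(0)=I(1)=0`. -/
noncomputable def Igauss (t : ℝ) : ℝ :=
  if t = 0 ∨ t = 1 then 0 else gaussPdf (gaussCdfInv t)


/-! Substituting `r = Φ⁻¹(t)`, which tends to `-∞` as `t → 0⁺`, the ratio becomes
`φ(r) / (Φ(r) √(2 log (1/Φ(r))))`. L'Hôpital's rule gives the Mills asymptotics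
`Φ(r) ~ φ(r)/|r|`, i.e. `φ(r)/Φ(r) ~ |r|`. Taking logarithms,
`2 log (1/Φ(r)) = r² + O(log |r|)`, so `√(2 log (1/Φ(r))) ~ |r|` as well. -/

open Filter Set Topology ProbabilityTheory

lemma tendsto_sq_atBot_atTop {R : Type*} [Ring R] [LinearOrder R] [IsStrictOrderedRing R] :
    Tendsto (fun x : R => x ^ 2) atBot atTop := by
  simpa only [neg_sq, Function.comp_def] using
    (tendsto_pow_atTop (α := R) two_ne_zero).comp tendsto_neg_atBot_atTop

lemma gaussPdf_eq_gaussianPDFReal : gaussPdf = gaussianPDFReal 0 1 := by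
  ext x
  simp [gaussPdf, gaussianPDFReal, sqrt_eq_rpow, rpow_neg (by positivity : (0:ℝ) ≤ 2 * π),
    neg_div]

lemma gaussPdf_pos (x : ℝ) : 0 < gaussPdf x := by
  unfold gaussPdf
  positivity

lemma continuous_gaussPdf : Continuous gaussPdf := by
  unfold gaussPdf
  fun_prop

lemma integrable_gaussPdf : Integrable gaussPdf := by
  rw [gaussPdf_eq_gaussianPDFReal]
  exact integrable_gaussianPDFReal 0 1

lemma hasDerivAt_gaussPdf (x : ℝ) : HasDerivAt gaussPdf (-x * gaussPdf x) x := by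
  have h : HasDerivAt (fun y : ℝ => -y ^ 2 / 2) (-x) x :=
    ((hasDerivAt_pow 2 x).neg.div_const 2).congr_deriv (by simp; ring)
  exact (h.exp.const_mul _).congr_deriv (by rw [gaussPdf]; ring)

lemma log_gaussPdf (x : ℝ) : log (gaussPdf x) = -log (2 * π) / 2 - x ^ 2 / 2 := by
  rw [gaussPdf, log_mul (by positivity) (by positivity), log_rpow (by positivity), log_exp]
  ring

lemma tendsto_gaussPdf_atBot : Tendsto gaussPdf atBot (𝓝 0) := by
  have h : Tendsto (fun x : ℝ => -x ^ 2 / 2) atBot atBot :=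
    (tendsto_neg_atTop_atBot.comp tendsto_sq_atBot_atTop).atBot_div_const two_pos
  have := (tendsto_exp_atBot.comp h).const_mul ((2 * π) ^ (-(1:ℝ)/2))
  rwa [mul_zero] at this

lemma gaussCdf_eq_cdf : gaussCdf = cdf (gaussianReal 0 1) := by
  ext r
  rw [cdf_eq_real, measureReal_def, gaussianReal_apply_eq_integral _ one_ne_zero,
    ENNReal.toReal_ofReal
      (setIntegral_nonneg measurableSet_Iic fun x _ => gaussianPDFReal_nonneg _ _ x),
    gaussCdf, gaussPdf_eq_gaussianPDFReal]

lemma tendsto_gaussCdf_atBot : Tendsto gaussCdf atBot (𝓝 0) := by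
  rw [gaussCdf_eq_cdf]
  exact tendsto_cdf_atBot _

lemma tendsto_gaussCdf_atTop : Tendsto gaussCdf atTop (𝓝 1) := by
  rw [gaussCdf_eq_cdf]
  exact tendsto_cdf_atTop _

lemma hasDerivAt_gaussCdf (r : ℝ) : HasDerivAt gaussCdf (gaussPdf r) r := by
  have hΦ : gaussCdf = fun u => gaussCdf 0 + ∫ x in (0:ℝ)..u, gaussPdf x := by
    ext u
    rw [← intervalIntegral.integral_Iic_sub_Iic integrable_gaussPdf.integrableOn
      integrable_gaussPdf.integrableOn, gaussCdf, gaussCdf, add_sub_cancel]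
  rw [hΦ]
  exact (intervalIntegral.integral_hasDerivAt_right (continuous_gaussPdf.intervalIntegrable 0 r)
    (continuous_gaussPdf.stronglyMeasurableAtFilter _ _)
    continuous_gaussPdf.continuousAt).const_add _

lemma continuous_gaussCdf : Continuous gaussCdf :=
  continuous_iff_continuousAt.2 fun r => (hasDerivAt_gaussCdf r).continuousAt

lemma strictMono_gaussCdf : StrictMono gaussCdf :=
  strictMono_of_hasDerivAt_pos hasDerivAt_gaussCdf gaussPdf_pos

lemma gaussCdf_pos (r : ℝ) : 0 < gaussCdf r := by
  have h : 0 ≤ gaussCdf (r - 1) := by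
    rw [gaussCdf_eq_cdf]
    exact cdf_nonneg _ _
  exact h.trans_lt (strictMono_gaussCdf (sub_one_lt r))

lemma gaussCdf_le_one (r : ℝ) : gaussCdf r ≤ 1 := by
  rw [gaussCdf_eq_cdf]
  exact cdf_le_one _ _

lemma Ioo_subset_range_gaussCdf : Ioo 0 1 ⊆ range gaussCdf := by
  intro t ht
  obtain ⟨a, ha⟩ := (tendsto_gaussCdf_atBot.eventually_lt_const ht.1).exists
  obtain ⟨b, hb⟩ := (tendsto_gaussCdf_atTop.eventually_const_lt ht.2).exists
  exact intermediate_value_univ a b continuous_gaussCdf ⟨ha.le, hb.le⟩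

lemma gaussCdf_gaussCdfInv {t : ℝ} (ht : t ∈ Ioo 0 1) : gaussCdf (gaussCdfInv t) = t :=
  Function.invFun_eq (Ioo_subset_range_gaussCdf ht)

lemma gaussCdfInv_lt_of_lt_gaussCdf {t r : ℝ} (ht : 0 < t) (htr : t < gaussCdf r) :
    gaussCdfInv t < r := by
  rw [← strictMono_gaussCdf.lt_iff_lt,
    gaussCdf_gaussCdfInv ⟨ht, htr.trans_le (gaussCdf_le_one r)⟩]
  exact htr

lemma tendsto_gaussCdfInv_nhdsGT_zero : Tendsto gaussCdfInv (𝓝[>] 0) atBot := by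
  refine tendsto_atBot.2 fun r => ?_
  filter_upwards [Ioo_mem_nhdsGT (gaussCdf_pos r)] with t ht
  exact (gaussCdfInv_lt_of_lt_gaussCdf ht.1 ht.2).le

lemma Igauss_of_mem_Ioo {t : ℝ} (ht : t ∈ Ioo 0 1) : Igauss t = gaussPdf (gaussCdfInv t) :=
  if_neg (by rintro (h | h) <;> linarith [ht.1, ht.2])

lemma tendsto_neg_mul_gaussCdf_div_gaussPdf_atBot :
    Tendsto (fun r => -r * gaussCdf r / gaussPdf r) atBot (𝓝 1) := by
  have hg : ∀ r : ℝ, r ≠ 0 →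
      HasDerivAt (fun x => gaussPdf x / -x) (gaussPdf r * (1 + (r ^ 2)⁻¹)) r := fun r hr =>
    ((hasDerivAt_gaussPdf r).div (hasDerivAt_id r).neg (neg_ne_zero.2 hr)).congr_deriv
      (by simp only [Pi.neg_apply, id]; field_simp; ring)
  have hratio :
      Tendsto (fun r => gaussPdf r / (gaussPdf r * (1 + (r ^ 2)⁻¹))) atBot (𝓝 1) := by
    have h : Tendsto (fun r : ℝ => (1 + (r ^ 2)⁻¹)⁻¹) atBot (𝓝 1) := by
      simpa using
        ((tendsto_inv_atTop_zero.comp (tendsto_sq_atBot_atTop (R := ℝ))).const_add 1).inv₀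
          (by norm_num)
    exact h.congr fun r => (div_mul_cancel_left₀ (gaussPdf_pos r).ne' _).symm
  have hlhopital := HasDerivAt.lhopital_zero_atBot (Eventually.of_forall hasDerivAt_gaussCdf)
    ((eventually_lt_atBot 0).mono fun r hr => hg r hr.ne)
    (Eventually.of_forall fun r => (mul_pos (gaussPdf_pos r) (by positivity)).ne')
    tendsto_gaussCdf_atBot (tendsto_gaussPdf_atBot.div_atTop tendsto_neg_atBot_atTop) hratio
  refine hlhopital.congr' ?_
  filter_upwards [eventually_lt_atBot 0] with r hr
  rw [div_div_eq_mul_div, mul_comm]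

lemma two_mul_log_inv_gaussCdf {r : ℝ} (hr : r < 0) :
    2 * log (1 / gaussCdf r)
      = r ^ 2 + log (2 * π) + log (r ^ 2) - 2 * log (-r * gaussCdf r / gaussPdf r) := by
  have hΦ := gaussCdf_pos r
  have hφ := gaussPdf_pos r
  have hr' : 0 < -r := neg_pos.2 hr
  set M := -r * gaussCdf r / gaussPdf r with hM
  have hΦM : gaussCdf r = M * gaussPdf r / -r := by
    rw [hM]
    field_simp [hr.ne]
  have hM_pos : 0 < M := by positivity
  rw [one_div, log_inv, hΦM, log_div (by positivity) hr'.ne', log_mul hM_pos.ne' hφ.ne',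
    log_gaussPdf, log_neg_eq_log, log_pow]
  push_cast
  ring

lemma tendsto_two_mul_log_inv_gaussCdf_div_sq :
    Tendsto (fun r => 2 * log (1 / gaussCdf r) / r ^ 2) atBot (𝓝 1) := by
  have hM : Tendsto (fun r => log (-r * gaussCdf r / gaussPdf r)) atBot (𝓝 0) := by
    simpa [Function.comp_def] using (continuousAt_log one_ne_zero).tendsto.comp
      tendsto_neg_mul_gaussCdf_div_gaussPdf_atBot
  have hlog : Tendsto (fun r : ℝ => log (r ^ 2) / r ^ 2) atBot (𝓝 0) :=
    isLittleO_log_id_atTop.tendsto_div_nhds_zero.comp tendsto_sq_atBot_atTop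
  have hlim := ((((tendsto_const_nhds (x := log (2 * π))).div_atTop tendsto_sq_atBot_atTop).add
    hlog).sub ((hM.div_atTop tendsto_sq_atBot_atTop).const_mul 2)).const_add 1
  rw [add_zero, mul_zero, sub_zero, add_zero] at hlim
  refine hlim.congr' ?_
  filter_upwards [eventually_lt_atBot 0] with r hr
  rw [two_mul_log_inv_gaussCdf hr]
  field_simp [hr.ne]
  ring

lemma tendsto_sqrt_two_mul_log_inv_gaussCdf_div_neg :
    Tendsto (fun r => √(2 * log (1 / gaussCdf r)) / -r) atBot (𝓝 1) := by
  have h := (continuous_sqrt.tendsto 1).comp tendsto_two_mul_log_inv_gaussCdf_div_sq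
  rw [sqrt_one] at h
  refine h.congr' ?_
  filter_upwards [eventually_lt_atBot 0] with r hr
  rw [Function.comp_apply, sqrt_div' _ (sq_nonneg r), sqrt_sq_eq_abs, abs_of_neg hr]

lemma tendsto_gaussPdf_div_gaussCdf_mul_sqrt :
    Tendsto (fun r => gaussPdf r / (gaussCdf r * √(2 * log (1 / gaussCdf r)))) atBot
      (𝓝 1) := by
  have h := (tendsto_neg_mul_gaussCdf_div_gaussPdf_atBot.inv₀ one_ne_zero).mul
    (tendsto_sqrt_two_mul_log_inv_gaussCdf_div_neg.inv₀ one_ne_zero)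
  rw [inv_one, mul_one] at h
  refine h.congr' ?_
  filter_upwards [eventually_lt_atBot 0] with r hr
  rw [inv_div, inv_div, div_mul_div_comm, mul_assoc, mul_comm (gaussPdf r),
    mul_div_mul_left _ _ (neg_ne_zero.2 hr.ne)]

/-- Asymptotics of the Gaussian isoperimetric function at the origin:
`lim_{t→0⁺} I(t)/(t (2 log(1/t))^{1/2}) = 1`. -/
theorem gaussian_isoperimetric_asymptotics :
    Filter.Tendsto (fun t : ℝ => Igauss t / (t * Real.sqrt (2 * Real.log (1/t))))
      (nhdsWithin 0 (Set.Ioi 0)) (nhds 1) := by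
  refine (tendsto_gaussPdf_div_gaussCdf_mul_sqrt.comp tendsto_gaussCdfInv_nhdsGT_zero).congr' ?_
  filter_upwards [Ioo_mem_nhdsGT one_pos] with t ht
  rw [Function.comp_apply, gaussCdf_gaussCdfInv ht, Igauss_of_mem_Ioo ht]
end

section
/- Let (Ω, μ) be a probability space and g ≥ 0 a μ-integrable function with g log g integrable. Then the entropy satisfies Ent(g) ≥ -log(μ{g ≠ 0}) · ∫ g dμ. -/
open MeasureTheory Real

/-!
Let `A = {g ≠ 0}`. Both `g` and `g log g` vanish off `A`, so their integrals may be taken over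
`A`, and Jensen's inequality for the convex function `t ↦ t log t` under the normalized measure
`μ|_A / μ(A)` reads `(∫ g) log ((∫ g) / μ(A)) ≤ ∫ g log g`.
-/

theorem integral_mul_log_integral_le {α : Type*} [MeasurableSpace α] {ν : Measure α}
    [IsFiniteMeasure ν] {f : α → ℝ} (hf : 0 ≤ᵐ[ν] f) (hfi : Integrable f ν)
    (hfl : Integrable (fun x => f x * log (f x)) ν) :
    (∫ x, f x ∂ν) * log (∫ x, f x ∂ν) ≤
      (∫ x, f x * log (f x) ∂ν) + (∫ x, f x ∂ν) * log (ν.real Set.univ) := by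
  rcases eq_zero_or_neZero ν with rfl | _
  · simp
  set c := ν.real Set.univ
  set I := ∫ x, f x ∂ν
  have hc : 0 < c := measureReal_univ_pos
  have jensen : (c⁻¹ * I) * log (c⁻¹ * I) ≤ c⁻¹ * ∫ x, f x * log (f x) ∂ν := by
    simpa only [average_eq, smul_eq_mul] using
      convexOn_mul_log.map_average_le continuous_mul_log.continuousOn isClosed_Ici hf hfi hfl
  have scaled : I * log (c⁻¹ * I) ≤ ∫ x, f x * log (f x) ∂ν := by
    simpa only [← mul_assoc, mul_inv_cancel₀ hc.ne', one_mul] using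
      mul_le_mul_of_nonneg_left jensen hc.le
  rcases eq_or_ne I 0 with hI | hI
  · simpa [hI] using scaled
  · rw [log_mul (inv_ne_zero hc.ne') hI, log_inv] at scaled
    linarith

/-- Lower bound for the entropy `Ent(g) = ∫ g log g dμ - (∫ g dμ) log(∫ g dμ)` on a
probability space: `Ent(g) ≥ -log(μ{g ≠ 0}) ∫ g dμ`. -/
theorem entropy_lower_bound {Ω : Type*} [MeasurableSpace Ω] (μ : Measure Ω)
    [IsProbabilityMeasure μ] (g : Ω → ℝ) (hg : ∀ x, 0 ≤ g x)
    (h1 : Integrable g μ)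
    (h2 : Integrable (fun x => g x * Real.log (g x)) μ) :
    -(Real.log ((μ {x | g x ≠ 0}).toReal)) * (∫ x, g x ∂μ) ≤
      (∫ x, g x * Real.log (g x) ∂μ) - (∫ x, g x ∂μ) * Real.log (∫ x, g x ∂μ) := by
  set A := {x | g x ≠ 0}
  have off_support {F : Ω → ℝ} (hF : ∀ x, g x = 0 → F x = 0) : ∫ x in A, F x ∂μ = ∫ x, F x ∂μ :=
    setIntegral_eq_integral_of_forall_compl_eq_zero fun x hx => hF x (not_not.mp hx)
  have jensen := integral_mul_log_integral_le (ν := μ.restrict A)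
    (Filter.Eventually.of_forall hg) h1.integrableOn h2.integrableOn
  rw [off_support fun x hx => hx, off_support fun x hx => by simp [hx],
    measureReal_restrict_apply_univ] at jensen
  rw [← measureReal_def]
  linarith
end
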